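/- Let N ≥ 2 be an integer, F̂ the transfer operator of the Farey map, φ₀(x) = x, and let a(n) be the μ-average of F̂_n φ₀ over [1/N,1], namely a(n) := (1/log N)·∑_{k=0}^{n} λ(𝒞_{k+1}^{1/N}). Then for all n ≥ 0 and all x ∈ [1/N, 1], |∑_{k=0}^{n} F̂^k φ₀(x) − a(n)| ≤ N(N−1)/2. -/

import Mathlib

open MeasureTheory

noncomputable def farey (x : ℝ) : ℝ := if x ≤ 1/2 then x / (1 - x) else (1 - x) / x

noncomputable def fareyHat (f : ℝ → ℝ) (x : ℝ) : ℝ :=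
  (f (x / (1 + x)) + x * f (1 / (1 + x))) / (1 + x)

noncomputable def phi0 : ℝ → ℝ := fun x => x

noncomputable def fareySum (n : ℕ) (x : ℝ) : ℝ :=
  ∑ k ∈ Finset.range (n + 1), (fareyHat^[k] phi0) x

/-- a(n) = (1/log N) ∑_{k=0}^{n} λ(𝒞_{k+1}^{1/N}) with 𝒞_{k+1}^{1/N} = F^{-k}[1/N,1]. -/
noncomputable def aAvg (N : ℕ) (n : ℕ) : ℝ :=
  (1 / Real.log N) *
    ∑ k ∈ Finset.range (n + 1),
      (volume (farey^[k] ⁻¹' (Set.Icc (1 / (N : ℝ)) 1) ∩ Set.Icc (0:ℝ) 1)).toReal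

open Set

noncomputable def uF (k : ℕ) : ℝ → ℝ := fareyHat^[k] phi0

noncomputable def duF : ℕ → ℝ → ℝ
  | 0 => fun _ => 1
  | (k+1) => fun x => (duF k (x/(1+x)) - x * duF k (1/(1+x)))/(1+x)^3
      + (uF k (1/(1+x)) - uF k (x/(1+x)))/(1+x)^2

lemma uF_succ (k : ℕ) (x : ℝ) :
    uF (k+1) x = (uF k (x/(1+x)) + x * uF k (1/(1+x)))/(1+x) := by
  simp [uF, Function.iterate_succ_apply', fareyHat]

structure GoodU (k : ℕ) : Prop where
  meas : Measurable (uF k)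
  cont : ContinuousOn (uF k) (Icc 0 1)
  nonneg : ∀ x ∈ Icc (0:ℝ) 1, 0 ≤ uF k x
  le_lin : ∀ x ∈ Icc (0:ℝ) 1, uF k x ≤ 2^k * x
  mono : MonotoneOn (uF k) (Icc 0 1)
  hderiv : ∀ x ∈ Ioo (0:ℝ) 1, HasDerivAt (uF k) (duF k x) x
  dnonneg : ∀ x ∈ Ioo (0:ℝ) 1, 0 ≤ duF k x
  danti : AntitoneOn (duF k) (Ioo 0 1)

lemma mem_a {x : ℝ} (hx : x ∈ Icc (0:ℝ) 1) : x/(1+x) ∈ Icc (0:ℝ) 1 := by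
  obtain ⟨h0, h1⟩ := hx
  constructor
  · positivity
  · rw [div_le_one (by linarith)]; linarith

lemma mem_b {x : ℝ} (hx : x ∈ Icc (0:ℝ) 1) : 1/(1+x) ∈ Icc (0:ℝ) 1 := by
  obtain ⟨h0, h1⟩ := hx
  constructor
  · positivity
  · rw [div_le_one (by linarith)]; linarith

lemma mem_a' {x : ℝ} (hx : x ∈ Ioo (0:ℝ) 1) : x/(1+x) ∈ Ioo (0:ℝ) 1 := by
  obtain ⟨h0, h1⟩ := hx
  constructor
  · positivity
  · rw [div_lt_one (by linarith)]; linarith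

lemma mem_b' {x : ℝ} (hx : x ∈ Ioo (0:ℝ) 1) : 1/(1+x) ∈ Ioo (0:ℝ) 1 := by
  obtain ⟨h0, h1⟩ := hx
  constructor
  · positivity
  · rw [div_lt_one (by linarith)]; linarith

lemma a_le_b {x : ℝ} (h0 : 0 ≤ x) (h1 : x ≤ 1) : x/(1+x) ≤ 1/(1+x) := by
  rw [div_le_div_iff₀ (by linarith) (by linarith)]; nlinarith

lemma goodU : ∀ k, GoodU k := by
  intro k
  induction k with
  | zero =>
    refine ⟨measurable_id, continuous_id.continuousOn, ?_, ?_, ?_, ?_, ?_, ?_⟩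
    · intro x hx; exact hx.1
    · intro x hx
      have : uF 0 x = x := rfl
      rw [this]; linarith [hx.1]
    · exact fun a _ b _ h => h
    · intro x _; exact hasDerivAt_id x
    · intro x _; norm_num [duF]
    · intro a _ b _ _; norm_num [duF]
  | succ k ih =>
    have hone : Measurable fun x : ℝ => 1 + x := measurable_const.add measurable_id
    have hmeasa : Measurable fun x : ℝ => x/(1+x) := measurable_id.div hone
    have hmeasb : Measurable fun x : ℝ => 1/(1+x) := measurable_const.div hone
    have heq : uF (k+1) = fun x => (uF k (x/(1+x)) + x * uF k (1/(1+x)))/(1+x) := by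
      funext x; exact uF_succ k x
    have hmeas : Measurable (uF (k+1)) := by
      rw [heq]
      exact ((ih.meas.comp hmeasa).add (measurable_id.mul (ih.meas.comp hmeasb))).div hone
    have hconta : ContinuousOn (fun x : ℝ => x/(1+x)) (Icc 0 1) := by
      apply ContinuousOn.div continuousOn_id (by fun_prop)
      intro x hx h; linarith [hx.1]
    have hcontb : ContinuousOn (fun x : ℝ => 1/(1+x)) (Icc 0 1) := by
      apply ContinuousOn.div continuousOn_const (by fun_prop)
      intro x hx h; linarith [hx.1]
    have hcont : ContinuousOn (uF (k+1)) (Icc 0 1) := by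
      rw [heq]
      apply ContinuousOn.div
      · exact (ih.cont.comp hconta (fun x hx => mem_a hx)).add
          (continuousOn_id.mul (ih.cont.comp hcontb (fun x hx => mem_b hx)))
      · fun_prop
      · intro x hx h; linarith [hx.1]
    have hnonneg : ∀ x ∈ Icc (0:ℝ) 1, 0 ≤ uF (k+1) x := by
      intro x hx
      rw [uF_succ]
      have h1 := ih.nonneg _ (mem_a hx)
      have h2 := ih.nonneg _ (mem_b hx)
      have hx0 := hx.1
      apply div_nonneg ?_ (by linarith)
      exact add_nonneg h1 (mul_nonneg hx0 h2)
    have hle : ∀ x ∈ Icc (0:ℝ) 1, uF (k+1) x ≤ 2^(k+1) * x := by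
      intro x hx
      rw [uF_succ]
      have h1 := ih.le_lin _ (mem_a hx)
      have h2 := ih.le_lin _ (mem_b hx)
      have hx0 := hx.1
      have h1x : (0:ℝ) < 1 + x := by linarith
      rw [div_le_iff₀ h1x]
      have h2' : x * uF k (1/(1+x)) ≤ x * (2^k * (1/(1+x))) :=
        mul_le_mul_of_nonneg_left h2 hx0
      have key : 2^k * (x/(1+x)) + x * (2^k * (1/(1+x))) ≤ 2^(k+1) * x * (1+x) := by
        have h2k : (0:ℝ) < 2^k := by positivity
        have he : 2^k * (x/(1+x)) + x * (2^k * (1/(1+x))) = 2^(k+1) * x/(1+x) := by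
          field_simp; ring
        rw [he, div_le_iff₀ h1x]
        have hp : (0:ℝ) ≤ 2^(k+1)*x*(2*x+x^2) := by positivity
        nlinarith [hp]
      linarith
    have hderiv : ∀ x ∈ Ioo (0:ℝ) 1, HasDerivAt (uF (k+1)) (duF (k+1) x) x := by
      intro x hx
      obtain ⟨hx0, hx1⟩ := hx
      have h1 : (1:ℝ) + x ≠ 0 := by nlinarith
      have ha := ih.hderiv _ (mem_a' ⟨hx0, hx1⟩)
      have hb := ih.hderiv _ (mem_b' ⟨hx0, hx1⟩)
      have hA : HasDerivAt (fun y : ℝ => y/(1+y)) (1/(1+x)^2) x := by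
        have := (hasDerivAt_id x).div ((hasDerivAt_const x 1).add (hasDerivAt_id x)) h1
        refine this.congr_deriv ?_
        simp only [Pi.add_apply, id]
        field_simp
        ring
      have hB : HasDerivAt (fun y : ℝ => 1/(1+y)) (-(1/(1+x)^2)) x := by
        have := (hasDerivAt_const x (1:ℝ)).div ((hasDerivAt_const x 1).add (hasDerivAt_id x)) h1
        refine this.congr_deriv ?_
        simp only [Pi.add_apply, id]
        field_simp
        ring
      have hfa := ha.comp x hA
      have hfb := hb.comp x hB
      have hnum : HasDerivAt (fun y : ℝ => uF k (y/(1+y)) + y * uF k (1/(1+y)))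
          (duF k (x/(1+x)) * (1/(1+x)^2)
            + (1 * uF k (1/(1+x)) + x * (duF k (1/(1+x)) * (-(1/(1+x)^2))))) x :=
        hfa.add ((hasDerivAt_id x).mul hfb)
      have hmain := hnum.div ((hasDerivAt_const x 1).add (hasDerivAt_id x)) h1
      rw [heq]
      have hd : duF (k+1) x = (duF k (x/(1+x)) - x * duF k (1/(1+x)))/(1+x)^3
          + (uF k (1/(1+x)) - uF k (x/(1+x)))/(1+x)^2 := rfl
      rw [hd]
      refine hmain.congr_deriv ?_
      simp only [Pi.add_apply, id]
      field_simp
      ring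
    have hdnonneg : ∀ x ∈ Ioo (0:ℝ) 1, 0 ≤ duF (k+1) x := by
      intro x hx
      obtain ⟨hx0, hx1⟩ := hx
      have ha' := mem_a' ⟨hx0, hx1⟩
      have hb' := mem_b' ⟨hx0, hx1⟩
      have hab : x/(1+x) ≤ 1/(1+x) := a_le_b (le_of_lt hx0) (le_of_lt hx1)
      have hba := ih.danti ha' hb' hab
      have hbn := ih.dnonneg _ hb'
      have h1 : uF k (x/(1+x)) ≤ uF k (1/(1+x)) :=
        ih.mono (mem_a ⟨le_of_lt hx0, le_of_lt hx1⟩) (mem_b ⟨le_of_lt hx0, le_of_lt hx1⟩) hab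
      have hd : duF (k+1) x = (duF k (x/(1+x)) - x * duF k (1/(1+x)))/(1+x)^3
          + (uF k (1/(1+x)) - uF k (x/(1+x)))/(1+x)^2 := rfl
      rw [hd]
      have hnum1 : 0 ≤ duF k (x/(1+x)) - x * duF k (1/(1+x)) := by nlinarith
      have h1x : (0:ℝ) < 1 + x := by linarith
      have := div_nonneg hnum1 (le_of_lt (pow_pos h1x 3))
      have := div_nonneg (by linarith : (0:ℝ) ≤ uF k (1/(1+x)) - uF k (x/(1+x)))
        (le_of_lt (pow_pos h1x 2))
      linarith
    have hmono : MonotoneOn (uF (k+1)) (Icc 0 1) := by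
      apply monotoneOn_of_deriv_nonneg (convex_Icc 0 1) hcont
      · rw [interior_Icc]
        intro x hx
        exact (hderiv x hx).differentiableAt.differentiableWithinAt
      · rw [interior_Icc]
        intro x hx
        rw [(hderiv x hx).deriv]
        exact hdnonneg x hx
    have hdanti : AntitoneOn (duF (k+1)) (Ioo 0 1) := by
      intro x hx y hy hxy
      obtain ⟨hx0, hx1⟩ := hx
      obtain ⟨hy0, hy1⟩ := hy
      have hax := mem_a' ⟨hx0, hx1⟩
      have hay := mem_a' ⟨hy0, hy1⟩
      have hbx := mem_b' ⟨hx0, hx1⟩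
      have hby := mem_b' ⟨hy0, hy1⟩
      have haa : x/(1+x) ≤ y/(1+y) := by
        rw [div_le_div_iff₀ (by linarith) (by linarith)]; nlinarith
      have hbb : 1/(1+y) ≤ 1/(1+x) := by
        rw [div_le_div_iff₀ (by linarith) (by linarith)]; nlinarith
      have habx : x/(1+x) ≤ 1/(1+x) := a_le_b (le_of_lt hx0) (le_of_lt hx1)
      have haby : y/(1+y) ≤ 1/(1+y) := a_le_b (le_of_lt hy0) (le_of_lt hy1)
      have hdax := ih.danti hax hay haa
      have hdbx := ih.danti hby hbx hbb
      have hdbyn := ih.dnonneg _ hby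
      have hdbxn := ih.dnonneg _ hbx
      have hN1y : 0 ≤ duF k (y/(1+y)) - y * duF k (1/(1+y)) := by
        have := ih.danti hay hby haby
        nlinarith
      have hN1 : duF k (y/(1+y)) - y * duF k (1/(1+y))
          ≤ duF k (x/(1+x)) - x * duF k (1/(1+x)) := by nlinarith
      have hMy : 0 ≤ uF k (1/(1+y)) - uF k (y/(1+y)) := by
        have := ih.mono (mem_a ⟨le_of_lt hy0, le_of_lt hy1⟩)
          (mem_b ⟨le_of_lt hy0, le_of_lt hy1⟩) haby
        linarith
      have hM : uF k (1/(1+y)) - uF k (y/(1+y)) ≤ uF k (1/(1+x)) - uF k (x/(1+x)) := by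
        have h1 := ih.mono (mem_a ⟨le_of_lt hx0, le_of_lt hx1⟩)
          (mem_a ⟨le_of_lt hy0, le_of_lt hy1⟩) haa
        have h2 := ih.mono (mem_b ⟨le_of_lt hy0, le_of_lt hy1⟩)
          (mem_b ⟨le_of_lt hx0, le_of_lt hx1⟩) hbb
        linarith
      have hdx : duF (k+1) x = (duF k (x/(1+x)) - x * duF k (1/(1+x)))/(1+x)^3
          + (uF k (1/(1+x)) - uF k (x/(1+x)))/(1+x)^2 := rfl
      have hdy : duF (k+1) y = (duF k (y/(1+y)) - y * duF k (1/(1+y)))/(1+y)^3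
          + (uF k (1/(1+y)) - uF k (y/(1+y)))/(1+y)^2 := rfl
      rw [hdx, hdy]
      have h1x : (0:ℝ) < 1 + x := by linarith
      have h1y : (0:ℝ) < 1 + y := by linarith
      have hT1 : (duF k (y/(1+y)) - y * duF k (1/(1+y)))/(1+y)^3
          ≤ (duF k (x/(1+x)) - x * duF k (1/(1+x)))/(1+x)^3 := by
        apply div_le_div₀ (by nlinarith) hN1 (pow_pos h1x 3)
        exact pow_le_pow_left₀ (le_of_lt h1x) (by linarith) 3
      have hT2 : (uF k (1/(1+y)) - uF k (y/(1+y)))/(1+y)^2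
          ≤ (uF k (1/(1+x)) - uF k (x/(1+x)))/(1+x)^2 := by
        apply div_le_div₀ (by linarith) hM (pow_pos h1x 2)
        exact pow_le_pow_left₀ (le_of_lt h1x) (by linarith) 2
      linarith
    exact ⟨hmeas, hcont, hnonneg, hle, hmono, hderiv, hdnonneg, hdanti⟩

lemma fareySum_eq (n : ℕ) (x : ℝ) : fareySum n x = ∑ k ∈ Finset.range (n+1), uF k x := rfl

lemma fareySum_mono (n : ℕ) : MonotoneOn (fareySum n) (Icc 0 1) := by
  intro x hx y hy hxy
  rw [fareySum_eq, fareySum_eq]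
  exact Finset.sum_le_sum fun k _ => (goodU k).mono hx hy hxy

lemma fareySum_succ (n : ℕ) (x : ℝ) :
    fareySum (n+1) x = fareySum n x + uF (n+1) x := by
  rw [fareySum_eq, fareySum_eq, Finset.sum_range_succ]

lemma uF_zero (x : ℝ) : uF 0 x = x := rfl

lemma uF_point (k : ℕ) {t : ℝ} (ht : 0 < t) :
    (t+1) * uF (k+1) (1/t) = t * uF k (1/(t+1)) + uF k (t/(t+1)) := by
  have h := uF_succ k (1/t)
  have ht' : t ≠ 0 := ne_of_gt ht
  have ht1 : (0:ℝ) < t + 1 := by linarith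
  have hne : (0:ℝ) < 1+1/t := by positivity
  have h1 : (1/t)/(1+1/t) = 1/(t+1) := by
    rw [div_eq_div_iff hne.ne' ht1.ne']
    field_simp
  have h2 : 1/(1+1/t) = t/(t+1) := by
    rw [div_eq_div_iff hne.ne' ht1.ne']
    field_simp
  rw [h1, h2] at h
  rw [h]
  field_simp

lemma key_id (n j : ℕ) (hj : 1 ≤ j) :
    ((j:ℝ)+1) * (fareySum (n+1) (1/(j:ℝ)) - 1/(j:ℝ))
      = (j:ℝ) * fareySum n (1/((j:ℝ)+1)) + fareySum n ((j:ℝ)/((j:ℝ)+1)) := by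
  have hj0 : (0:ℝ) < (j:ℝ) := by exact_mod_cast hj
  have hshift : fareySum (n+1) (1/(j:ℝ)) - 1/(j:ℝ)
      = ∑ k ∈ Finset.range (n+1), uF (k+1) (1/(j:ℝ)) := by
    rw [fareySum_eq, Finset.sum_range_succ']
    rw [uF_zero]
    ring
  rw [hshift, Finset.mul_sum, fareySum_eq, fareySum_eq, Finset.mul_sum,
    ← Finset.sum_add_distrib]
  exact Finset.sum_congr rfl fun k _ => uF_point k hj0

lemma osc_bound (n : ℕ) : ∀ j : ℕ, 2 ≤ j →
    fareySum n 1 - fareySum n (1/(j:ℝ)) ≤ (j:ℝ)*(3/2 - 1/((j:ℝ)-1)) := by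
  intro j hj
  induction j, hj using Nat.le_induction with
  | base =>
    have h := key_id n 1 le_rfl
    norm_num at h
    have h2 := fareySum_succ n 1
    have hu : 0 ≤ uF (n+1) 1 := (goodU (n+1)).nonneg 1 (by norm_num)
    norm_num
    nlinarith [h, h2, hu]
  | succ j hj ih =>
    have hc : (2:ℝ) ≤ (j:ℝ) := by exact_mod_cast hj
    have hj0 : (0:ℝ) < (j:ℝ) := by linarith
    have h := key_id n j (by omega)
    have h2 := fareySum_succ n (1/(j:ℝ))
    have hu : 0 ≤ uF (n+1) (1/(j:ℝ)) := by
      apply (goodU (n+1)).nonneg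
      constructor
      · positivity
      · rw [div_le_one hj0]; linarith
    have hmem1 : ((j:ℝ)/((j:ℝ)+1)) ∈ Icc (0:ℝ) 1 :=
      ⟨by positivity, by rw [div_le_one (by linarith)]; linarith⟩
    have hmono : fareySum n ((j:ℝ)/((j:ℝ)+1)) ≤ fareySum n 1 :=
      fareySum_mono n hmem1 (by norm_num : (1:ℝ) ∈ Icc (0:ℝ) 1)
        (by rw [div_le_one (by linarith)]; linarith)
    have ihs := ih
    -- j * E_{j+1} ≤ (j+1) E_j + (j+1)/j
    have hpush : Nat.cast (j+1) = (j:ℝ)+1 := by push_cast; ring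
    rw [hpush]
    have hkey : (j:ℝ) * (fareySum n 1 - fareySum n (1/((j:ℝ)+1)))
        ≤ ((j:ℝ)+1) * (fareySum n 1 - fareySum n (1/(j:ℝ))) + ((j:ℝ)+1)/(j:ℝ) := by
      have hh : ((j:ℝ)+1) * (fareySum n (1/(j:ℝ)) + uF (n+1) (1/(j:ℝ)) - 1/(j:ℝ))
          = (j:ℝ) * fareySum n (1/((j:ℝ)+1)) + fareySum n ((j:ℝ)/((j:ℝ)+1)) := by
        rw [← h2]; exact h
      have hd : ((j:ℝ)+1) * (1/(j:ℝ)) = ((j:ℝ)+1)/(j:ℝ) := by ring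
      nlinarith [hh, hmono, hu]
    have hfin : ((j:ℝ)+1) * ((j:ℝ)*(3/2 - 1/((j:ℝ)-1))) + ((j:ℝ)+1)/(j:ℝ)
        ≤ (j:ℝ) * (((j:ℝ)+1)*(3/2 - 1/((j:ℝ)+1-1))) := by
      have hj1 : (0:ℝ) < (j:ℝ) - 1 := by linarith
      have hba : 1/(j:ℝ) ≤ 1/((j:ℝ)-1) := by
        apply one_div_le_one_div_of_le hj1 (by linarith)
      have hG : (j:ℝ) * (((j:ℝ)+1)*(3/2 - 1/((j:ℝ)+1-1)))
          - ((((j:ℝ)+1) * ((j:ℝ)*(3/2 - 1/((j:ℝ)-1)))) + ((j:ℝ)+1)/(j:ℝ))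
          = ((j:ℝ)+1)*(1/((j:ℝ)-1) - 1/(j:ℝ)) := by
        rw [show (j:ℝ)+1-1 = (j:ℝ) by ring]
        field_simp
        ring
      have hpos : 0 ≤ ((j:ℝ)+1)*(1/((j:ℝ)-1) - 1/(j:ℝ)) :=
        mul_nonneg (by linarith) (by linarith [hba])
      linarith [hG, hpos]
    nlinarith [hkey, ihs, hfin, hj0]

-- ## Part 3: measure duality

lemma farey_meas : Measurable farey := by
  unfold farey
  exact Measurable.ite (measurableSet_le measurable_id measurable_const)
    (measurable_id.div (measurable_const.sub measurable_id))
    ((measurable_const.sub measurable_id).div measurable_id)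

theorem lintegral_image_eq_lintegral_abs_deriv_mul' {s : Set ℝ} {f : ℝ → ℝ} {f' : ℝ → ℝ}
    (hs : MeasurableSet s) (hf' : ∀ x ∈ s, HasDerivWithinAt f (f' x) s x)
    (hf : InjOn f s) (g : ℝ → ENNReal) :
    ∫⁻ x in f '' s, g x = ∫⁻ x in s, ENNReal.ofReal |f' x| * g (f x) := by
  simpa only [ContinuousLinearMap.det_toSpanSingleton] using
    MeasureTheory.lintegral_image_eq_lintegral_abs_det_fderiv_mul volume hs
      (fun x hx => (hf' x hx).hasFDerivWithinAt) hf g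

lemma farey_g0 {y : ℝ} (hy : y ∈ Ioc (0:ℝ) 1) : farey (y/(1+y)) = y := by
  obtain ⟨hy0, hy1⟩ := hy
  have h1y : (0:ℝ) < 1 + y := by linarith
  unfold farey
  rw [if_pos (by rw [div_le_div_iff₀ h1y (by norm_num)]; linarith)]
  have : 1 - y/(1+y) = 1/(1+y) := by field_simp; ring
  rw [this]
  field_simp

lemma farey_g1 {y : ℝ} (hy : y ∈ Ico (0:ℝ) 1) : farey (1/(1+y)) = y := by
  obtain ⟨hy0, hy1⟩ := hy
  have h1y : (0:ℝ) < 1 + y := by linarith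
  unfold farey
  rw [if_neg (by rw [div_le_div_iff₀ h1y (by norm_num)]; intro h; linarith)]
  have : 1 - 1/(1+y) = y/(1+y) := by field_simp; ring
  rw [this, div_div_eq_mul_div]
  field_simp

lemma img_g0 : Ioc (0:ℝ) (1/2) = (fun y : ℝ => y/(1+y)) '' (Ioc 0 1) := by
  ext x
  constructor
  · rintro ⟨hx0, hx2⟩
    have hx1 : x < 1 := by linarith
    refine ⟨x/(1-x), ⟨div_pos hx0 (by linarith), ?_⟩, ?_⟩
    · rw [div_le_one (by linarith)]; linarith
    · have h1x : (1:ℝ) - x ≠ 0 := ne_of_gt (by linarith)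
      show (x/(1-x))/(1+x/(1-x)) = x
      have h2 : 1 + x/(1-x) = 1/(1-x) := by field_simp; ring
      rw [h2, div_div_eq_mul_div]
      field_simp
  · rintro ⟨y, ⟨hy0, hy1⟩, rfl⟩
    refine ⟨by positivity, ?_⟩
    rw [div_le_div_iff₀ (by linarith) (by norm_num)]; linarith

lemma img_g1 : Ioc (1/2:ℝ) 1 = (fun y : ℝ => 1/(1+y)) '' (Ico 0 1) := by
  ext x
  constructor
  · rintro ⟨hx2, hx1⟩
    have hx0 : (0:ℝ) < x := by linarith
    refine ⟨(1-x)/x, ⟨div_nonneg (by linarith) (by linarith), ?_⟩, ?_⟩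
    · rw [div_lt_one hx0]; linarith
    · show 1/(1+(1-x)/x) = x
      have h2 : 1 + (1-x)/x = 1/x := by field_simp; ring
      rw [h2, one_div_one_div]
  · rintro ⟨y, ⟨hy0, hy1⟩, rfl⟩
    constructor
    · rw [div_lt_div_iff₀ (by norm_num) (by linarith)]; linarith
    · rw [div_le_one (by linarith)]; linarith

lemma hasDeriv_g0 {y : ℝ} (hy : (0:ℝ) < y) :
    HasDerivAt (fun y : ℝ => y/(1+y)) (1/(1+y)^2) y := by
  have h1 : (1:ℝ) + y ≠ 0 := by linarith
  have := (hasDerivAt_id y).div ((hasDerivAt_const y 1).add (hasDerivAt_id y)) h1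
  refine this.congr_deriv ?_
  simp only [Pi.add_apply, id]
  field_simp
  ring

lemma hasDeriv_g1 {y : ℝ} (hy : (0:ℝ) ≤ y) :
    HasDerivAt (fun y : ℝ => 1/(1+y)) (-(1/(1+y)^2)) y := by
  have h1 : (1:ℝ) + y ≠ 0 := by linarith
  have := (hasDerivAt_const y (1:ℝ)).div ((hasDerivAt_const y 1).add (hasDerivAt_id y)) h1
  refine this.congr_deriv ?_
  simp only [Pi.add_apply, id]
  field_simp
  ring

lemma step_lemma (φ : ℝ → ENNReal) (hφ : Measurable φ) (f : ℝ → ℝ)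
    (hfm : Measurable f) (hf0 : ∀ x ∈ Icc (0:ℝ) 1, 0 ≤ f x) :
    ∫⁻ x in Ioc (0:ℝ) 1, φ (farey x) * ENNReal.ofReal (f x / x)
      = ∫⁻ y in Ioc (0:ℝ) 1, φ y * ENNReal.ofReal (fareyHat f y / y) := by
  have hsplit : Ioc (0:ℝ) 1 = Ioc 0 (1/2) ∪ Ioc (1/2) 1 :=
    (Ioc_union_Ioc_eq_Ioc (by norm_num) (by norm_num)).symm
  have hdisj : Disjoint (Ioc (0:ℝ) (1/2)) (Ioc (1/2:ℝ) 1) :=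
    disjoint_left.mpr fun x hx hx' => absurd hx'.1 (not_lt.mpr hx.2)
  have hsplitL : ∀ g : ℝ → ENNReal, ∫⁻ x in Ioc (0:ℝ) 1, g x
      = (∫⁻ x in Ioc (0:ℝ) (1/2), g x) + ∫⁻ x in Ioc (1/2:ℝ) 1, g x := by
    intro g
    rw [hsplit, lintegral_union measurableSet_Ioc hdisj]
  -- left piece
  have hL : ∫⁻ x in Ioc (0:ℝ) (1/2), φ (farey x) * ENNReal.ofReal (f x / x)
      = ∫⁻ y in Ioc (0:ℝ) 1, φ y * ENNReal.ofReal (f (y/(1+y)) / (y*(1+y))) := by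
    rw [img_g0, lintegral_image_eq_lintegral_abs_deriv_mul' measurableSet_Ioc
      (fun y hy => (hasDeriv_g0 hy.1).hasDerivWithinAt)
      (fun a ha b hb h => by
        have h1a : (1:ℝ) + a ≠ 0 := by have := ha.1; intro hc; linarith
        have h1b : (1:ℝ) + b ≠ 0 := by have := hb.1; intro hc; linarith
        field_simp at h
        linarith)]
    apply setLIntegral_congr_fun measurableSet_Ioc
    intro y hy
    dsimp only
    obtain ⟨hy0, hy1⟩ := hy
    have h1y : (0:ℝ) < 1 + y := by linarith
    rw [farey_g0 ⟨hy0, hy1⟩]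
    rw [abs_of_pos (by positivity : (0:ℝ) < 1/(1+y)^2)]
    rw [← mul_assoc, mul_comm (ENNReal.ofReal (1/(1+y)^2)) (φ y), mul_assoc]
    congr 1
    rw [← ENNReal.ofReal_mul (by positivity)]
    congr 1
    rw [div_div_eq_mul_div, div_mul_eq_mul_div]
    have hyne : y ≠ 0 := ne_of_gt hy0
    field_simp
  -- right piece
  have hR : ∫⁻ x in Ioc (1/2:ℝ) 1, φ (farey x) * ENNReal.ofReal (f x / x)
      = ∫⁻ y in Ioc (0:ℝ) 1, φ y * ENNReal.ofReal (f (1/(1+y)) / (1+y)) := by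
    rw [img_g1, lintegral_image_eq_lintegral_abs_deriv_mul' measurableSet_Ico
      (fun y hy => (hasDeriv_g1 hy.1).hasDerivWithinAt)
      (fun a ha b hb h => by
        have h1a : (1:ℝ) + a ≠ 0 := by have := ha.1; intro hc; linarith
        have h1b : (1:ℝ) + b ≠ 0 := by have := hb.1; intro hc; linarith
        field_simp at h
        linarith)]
    rw [setLIntegral_congr (Ico_ae_eq_Ioc (μ := volume) (a := (0:ℝ)) (b := 1))]
    apply setLIntegral_congr_fun measurableSet_Ioc
    intro y hy
    dsimp only
    obtain ⟨hy0, hy1⟩ := hy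
    have h1y : (0:ℝ) < 1 + y := by linarith
    have hfg1 : farey (1/(1+y)) = y := by
      rcases eq_or_lt_of_le hy1 with h|h
      · rw [h]; norm_num [farey]
      · exact farey_g1 ⟨le_of_lt hy0, h⟩
    rw [hfg1]
    rw [abs_neg, abs_of_pos (by positivity : (0:ℝ) < 1/(1+y)^2)]
    rw [← mul_assoc, mul_comm (ENNReal.ofReal (1/(1+y)^2)) (φ y), mul_assoc]
    congr 1
    rw [← ENNReal.ofReal_mul (by positivity)]
    congr 1
    rw [div_div_eq_mul_div]
    field_simp
  have hmeas1 : Measurable fun y : ℝ => φ y * ENNReal.ofReal (f (y/(1+y)) / (y*(1+y))) :=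
    hφ.mul ((hfm.comp (measurable_id.div (measurable_const.add measurable_id))).div
      (measurable_id.mul (measurable_const.add measurable_id))).ennreal_ofReal
  rw [hsplitL (fun x => φ (farey x) * ENNReal.ofReal (f x / x)), hL, hR,
    ← lintegral_add_left hmeas1]
  · apply setLIntegral_congr_fun measurableSet_Ioc
    intro y hy
    dsimp only
    obtain ⟨hy0, hy1⟩ := hy
    have h1y : (0:ℝ) < 1 + y := by linarith
    have ha0 : 0 ≤ f (y/(1+y)) := hf0 _ (mem_a ⟨le_of_lt hy0, hy1⟩)
    have hb0 : 0 ≤ f (1/(1+y)) := hf0 _ (mem_b ⟨le_of_lt hy0, hy1⟩)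
    rw [← mul_add, ← ENNReal.ofReal_add (by positivity) (by positivity)]
    congr 2
    unfold fareyHat
    field_simp

lemma uF_succ_fun (j : ℕ) : fareyHat (uF j) = uF (j+1) := by
  funext x
  rw [uF_succ]
  rfl

lemma iter_dual (A : Set ℝ) (hA : MeasurableSet A) (k : ℕ) : ∀ j : ℕ,
    ∫⁻ x in Ioc (0:ℝ) 1, (A.indicator 1 (farey^[k] x)) * ENNReal.ofReal (uF j x / x)
      = ∫⁻ x in Ioc (0:ℝ) 1, (A.indicator 1 x) * ENNReal.ofReal (uF (j+k) x / x) := by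
  induction k with
  | zero => intro j; simp
  | succ k ih =>
    intro j
    have hφm0 : Measurable (A.indicator (1 : ℝ → ENNReal)) := measurable_one.indicator hA
    have hφm : Measurable fun z : ℝ => A.indicator (1 : ℝ → ENNReal) (farey^[k] z) :=
      hφm0.comp' (farey_meas.iterate k)
    have hstep := step_lemma (fun z => A.indicator 1 (farey^[k] z)) hφm (uF j)
      (goodU j).meas (goodU j).nonneg
    have hl : ∫⁻ x in Ioc (0:ℝ) 1, (A.indicator 1 (farey^[k+1] x)) * ENNReal.ofReal (uF j x / x)
        = ∫⁻ x in Ioc (0:ℝ) 1, (A.indicator 1 (farey^[k] (farey x))) * ENNReal.ofReal (uF j x / x) := by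
      apply setLIntegral_congr_fun measurableSet_Ioc
      intro x _
      dsimp only
      rw [Function.iterate_succ_apply]
    rw [hl, hstep]
    have hr : ∫⁻ y in Ioc (0:ℝ) 1, (A.indicator 1 (farey^[k] y)) * ENNReal.ofReal (fareyHat (uF j) y / y)
        = ∫⁻ y in Ioc (0:ℝ) 1, (A.indicator 1 (farey^[k] y)) * ENNReal.ofReal (uF (j+1) y / y) := by
      rw [uF_succ_fun]
    rw [hr, ih (j+1)]
    have he : j + 1 + k = j + (k+1) := by omega
    rw [he]

lemma vol_eq_lint (A : Set ℝ) (hA : MeasurableSet A) (k : ℕ) :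
    volume (farey^[k] ⁻¹' A ∩ Icc (0:ℝ) 1)
      = ∫⁻ x in Ioc (0:ℝ) 1, (A.indicator 1 x) * ENNReal.ofReal (uF k x / x) := by
  have hP : MeasurableSet (farey^[k] ⁻¹' A) := (farey_meas.iterate k) hA
  have h1 : volume (farey^[k] ⁻¹' A ∩ Icc (0:ℝ) 1) = volume (farey^[k] ⁻¹' A ∩ Ioc (0:ℝ) 1) := by
    apply measure_congr
    exact MeasureTheory.ae_eq_set_inter (Filter.EventuallyEq.refl _ _) (Ioc_ae_eq_Icc).symm
  rw [h1, ← Measure.restrict_apply hP]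
  rw [← lintegral_indicator_one (μ := volume.restrict (Ioc (0:ℝ) 1)) hP]
  have h2 : ∫⁻ x in Ioc (0:ℝ) 1, (farey^[k] ⁻¹' A).indicator 1 x
      = ∫⁻ x in Ioc (0:ℝ) 1, (A.indicator 1 (farey^[k] x)) * ENNReal.ofReal (uF 0 x / x) := by
    apply setLIntegral_congr_fun measurableSet_Ioc
    intro x hx
    dsimp only
    have hxx : uF 0 x / x = 1 := div_self (ne_of_gt hx.1)
    rw [hxx, ENNReal.ofReal_one, mul_one]
    by_cases h : farey^[k] x ∈ A
    · simp [Set.indicator_of_mem, h, Set.indicator_of_mem (Set.mem_preimage.mpr h)]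
    · simp [Set.indicator_of_notMem, h, Set.indicator_of_notMem (fun hc => h (Set.mem_preimage.mp hc))]
  rw [h2, iter_dual A hA k 0]
  norm_num

lemma lint_eq_integral (N : ℕ) (hN : 2 ≤ N) (k : ℕ) :
    volume (farey^[k] ⁻¹' (Icc (1/(N:ℝ)) 1) ∩ Icc (0:ℝ) 1)
      = ENNReal.ofReal (∫ y in Icc (1/(N:ℝ)) 1, uF k y / y) := by
  have hN2 : (2:ℝ) ≤ (N:ℝ) := by exact_mod_cast hN
  have hN0 : (0:ℝ) < (N:ℝ) := by linarith
  have hinv0 : (0:ℝ) < 1/(N:ℝ) := by positivity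
  have hinv1 : 1/(N:ℝ) ≤ 1 := by rw [div_le_one hN0]; linarith
  have hsub : Icc (1/(N:ℝ)) 1 ⊆ Icc (0:ℝ) 1 := Icc_subset_Icc (le_of_lt hinv0) le_rfl
  have hsub' : Icc (1/(N:ℝ)) 1 ⊆ Ioc (0:ℝ) 1 := fun y hy => ⟨lt_of_lt_of_le hinv0 hy.1, hy.2⟩
  rw [vol_eq_lint _ measurableSet_Icc k]
  have h3 : ∫⁻ x in Ioc (0:ℝ) 1, ((Icc (1/(N:ℝ)) 1).indicator 1 x) * ENNReal.ofReal (uF k x / x)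
      = ∫⁻ x in Ioc (0:ℝ) 1, (Icc (1/(N:ℝ)) 1).indicator (fun y => ENNReal.ofReal (uF k y / y)) x := by
    apply setLIntegral_congr_fun measurableSet_Ioc
    intro x _
    dsimp only
    by_cases h : x ∈ Icc (1/(N:ℝ)) 1
    · rw [Set.indicator_of_mem h, Set.indicator_of_mem h, Pi.one_apply, one_mul]
    · rw [Set.indicator_of_notMem h, Set.indicator_of_notMem h, zero_mul]
  rw [h3, lintegral_indicator measurableSet_Icc, Measure.restrict_restrict measurableSet_Icc,
    Set.inter_eq_left.mpr hsub']
  have hint : IntegrableOn (fun y => uF k y / y) (Icc (1/(N:ℝ)) 1) := by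
    apply ContinuousOn.integrableOn_Icc
    apply ContinuousOn.div ((goodU k).cont.mono hsub) continuousOn_id
    intro y hy
    exact ne_of_gt (lt_of_lt_of_le hinv0 hy.1)
  rw [← MeasureTheory.ofReal_integral_eq_lintegral_ofReal hint]
  · apply (ae_restrict_iff' measurableSet_Icc).mpr
    filter_upwards with y hy
    exact div_nonneg ((goodU k).nonneg y (hsub hy)) (le_of_lt (lt_of_lt_of_le hinv0 hy.1))

lemma fareySum_cont (n : ℕ) : ContinuousOn (fareySum n) (Icc 0 1) := by
  have : fareySum n = fun x => ∑ k ∈ Finset.range (n+1), uF k x := by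
    funext x; exact fareySum_eq n x
  rw [this]
  exact continuousOn_finset_sum _ (fun i _ => (goodU i).cont)

theorem fareySum_avg_bound (N : ℕ) (hN : 2 ≤ N) (n : ℕ)
    (x : ℝ) (hx : x ∈ Set.Icc (1 / (N : ℝ)) 1) :
    |fareySum n x - aAvg N n| ≤ (N : ℝ) * ((N : ℝ) - 1) / 2 := by
  have hN2 : (2:ℝ) ≤ (N:ℝ) := by exact_mod_cast hN
  have hN0 : (0:ℝ) < N := by linarith
  have hinv0 : (0:ℝ) < 1/(N:ℝ) := by positivity
  have hinv1 : 1/(N:ℝ) ≤ 1 := by rw [div_le_one hN0]; linarith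
  have hlog : 0 < Real.log N := Real.log_pos (by linarith)
  have hsub : Icc (1/(N:ℝ)) 1 ⊆ Icc (0:ℝ) 1 := Icc_subset_Icc (le_of_lt hinv0) le_rfl
  -- the sum of volumes equals the integral of fareySum/y
  have hintk : ∀ k : ℕ, IntegrableOn (fun y => uF k y / y) (Icc (1/(N:ℝ)) 1) := by
    intro k
    apply ContinuousOn.integrableOn_Icc
    apply ContinuousOn.div ((goodU k).cont.mono hsub) continuousOn_id
    intro y hy
    exact ne_of_gt (lt_of_lt_of_le hinv0 hy.1)
  have hsum : ∑ k ∈ Finset.range (n+1),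
        (volume (farey^[k] ⁻¹' (Set.Icc (1/(N:ℝ)) 1) ∩ Set.Icc (0:ℝ) 1)).toReal
      = ∫ y in Icc (1/(N:ℝ)) 1, fareySum n y / y := by
    have hc : ∀ k ∈ Finset.range (n+1),
        (volume (farey^[k] ⁻¹' (Set.Icc (1/(N:ℝ)) 1) ∩ Set.Icc (0:ℝ) 1)).toReal
        = ∫ y in Icc (1/(N:ℝ)) 1, uF k y / y := by
      intro k _
      rw [lint_eq_integral N hN k, ENNReal.toReal_ofReal]
      exact setIntegral_nonneg measurableSet_Icc (fun y hy =>
        div_nonneg ((goodU k).nonneg y (hsub hy)) (le_of_lt (lt_of_lt_of_le hinv0 hy.1)))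
    rw [Finset.sum_congr rfl hc, ← integral_finset_sum _ (fun k _ => hintk k)]
    apply setIntegral_congr_fun measurableSet_Icc
    intro y _
    show (∑ i ∈ Finset.range (n+1), uF i y / y) = fareySum n y / y
    rw [fareySum_eq, Finset.sum_div]
  have hintS : IntegrableOn (fun y => fareySum n y / y) (Icc (1/(N:ℝ)) 1) := by
    apply ContinuousOn.integrableOn_Icc
    apply ContinuousOn.div ((fareySum_cont n).mono hsub) continuousOn_id
    intro y hy
    exact ne_of_gt (lt_of_lt_of_le hinv0 hy.1)
  have hint1 : IntegrableOn (fun y : ℝ => 1/y) (Icc (1/(N:ℝ)) 1) := by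
    apply ContinuousOn.integrableOn_Icc
    apply ContinuousOn.div continuousOn_const continuousOn_id
    intro y hy
    exact ne_of_gt (lt_of_lt_of_le hinv0 hy.1)
  have hlogint : ∫ y in Icc (1/(N:ℝ)) 1, 1/y = Real.log N := by
    rw [MeasureTheory.integral_Icc_eq_integral_Ioc,
      ← intervalIntegral.integral_of_le hinv1]
    have hone : ∫ y in (1/(N:ℝ))..1, 1/y = ∫ y in (1/(N:ℝ))..1, y⁻¹ := by
      simp only [one_div]
    rw [hone, integral_inv_of_pos hinv0 one_pos,
      show (1:ℝ)/(1/(N:ℝ)) = (N:ℝ) by field_simp]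
  have hmem1 : (1:ℝ) ∈ Icc (0:ℝ) 1 := by norm_num
  have hmemN : (1/(N:ℝ)) ∈ Icc (0:ℝ) 1 := ⟨le_of_lt hinv0, hinv1⟩
  have hup : ∫ y in Icc (1/(N:ℝ)) 1, fareySum n y / y ≤ fareySum n 1 * Real.log N := by
    calc ∫ y in Icc (1/(N:ℝ)) 1, fareySum n y / y
        ≤ ∫ y in Icc (1/(N:ℝ)) 1, fareySum n 1 * (1/y) := by
          apply setIntegral_mono_on hintS (hint1.const_mul _) measurableSet_Icc
          intro y hy
          rw [mul_one_div]
          have hy0 : 0 < y := lt_of_lt_of_le hinv0 hy.1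
          exact (div_le_div_iff_of_pos_right hy0).mpr (fareySum_mono n (hsub hy) hmem1 hy.2)
      _ = fareySum n 1 * Real.log N := by
          rw [integral_const_mul, hlogint]
  have hlow : fareySum n (1/(N:ℝ)) * Real.log N ≤ ∫ y in Icc (1/(N:ℝ)) 1, fareySum n y / y := by
    calc fareySum n (1/(N:ℝ)) * Real.log N
        = ∫ y in Icc (1/(N:ℝ)) 1, fareySum n (1/(N:ℝ)) * (1/y) := by
          rw [integral_const_mul, hlogint]
      _ ≤ ∫ y in Icc (1/(N:ℝ)) 1, fareySum n y / y := by
          apply setIntegral_mono_on (hint1.const_mul _) hintS measurableSet_Icc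
          intro y hy
          rw [mul_one_div]
          have hy0 : 0 < y := lt_of_lt_of_le hinv0 hy.1
          exact (div_le_div_iff_of_pos_right hy0).mpr (fareySum_mono n hmemN (hsub hy) hy.1)
  have haAvg : aAvg N n = (1/Real.log N) * ∫ y in Icc (1/(N:ℝ)) 1, fareySum n y / y := by
    unfold aAvg
    rw [hsum]
  have havg_le : aAvg N n ≤ fareySum n 1 := by
    rw [haAvg]
    have h1 : fareySum n 1 = (1/Real.log N)*(fareySum n 1 * Real.log N) := by
      field_simp
    rw [h1]
    exact mul_le_mul_of_nonneg_left hup (by positivity)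
  have havg_ge : fareySum n (1/(N:ℝ)) ≤ aAvg N n := by
    rw [haAvg]
    nth_rewrite 1 [show fareySum n (1/(N:ℝ))
      = (1/Real.log N)*(fareySum n (1/(N:ℝ)) * Real.log N) by field_simp]
    exact mul_le_mul_of_nonneg_left hlow (by positivity)
  have hx01 : x ∈ Icc (0:ℝ) 1 := hsub hx
  have hxle : fareySum n x ≤ fareySum n 1 := fareySum_mono n hx01 hmem1 hx.2
  have hxge : fareySum n (1/(N:ℝ)) ≤ fareySum n x := fareySum_mono n hmemN hx01 hx.1
  have hosc := osc_bound n N hN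
  have hfin : (N:ℝ)*(3/2 - 1/((N:ℝ)-1)) ≤ (N:ℝ)*((N:ℝ)-1)/2 := by
    rcases eq_or_lt_of_le hN with h2|h3
    · rw [← h2]; norm_num
    · have hN3 : (3:ℝ) ≤ (N:ℝ) := by exact_mod_cast h3
      have hm : (0:ℝ) < (N:ℝ) - 1 := by linarith
      have key : (1/((N:ℝ)-1)) * ((N:ℝ)-1) = 1 := by field_simp
      have h23 : (0:ℝ) ≤ ((N:ℝ)-2)*((N:ℝ)-3) := mul_nonneg (by linarith) (by linarith)
      nlinarith [key, h23, hN0, hm]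
  rw [abs_le]
  constructor <;> linarith
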